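/- Let m ≥ n, let G ∈ ℝ^{m×n} be nonzero, let S ∈ ℝ^{n×n} be diagonal with strictly positive diagonal entries, and let λ > 0. Then the functional F(ΔW) = ⟨G, ΔW⟩_F + (λ/2)·‖ΔW·S^{−1}‖₂² over ΔW ∈ ℝ^{m×n} has a unique global minimizer if and only if G has full column rank n. -/

import Mathlib

open Matrix
open scoped Matrix.Norms.L2Operator

/-- The spectral norm (`ℓ2 → ℓ2` operator norm) of a real matrix, i.e. its largest
singular value.  This is Mathlib's scoped L2 operator norm on matrices. -/
noncomputable def matrixSpectralNorm {m n : ℕ} (M : Matrix (Fin m) (Fin n) ℝ) : ℝ := ‖M‖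

open Classical in
/-- The unique symmetric positive semidefinite square root of a positive semidefinite
real matrix (junk value `0` if the input is not positive semidefinite). -/
noncomputable def matrixSqrt {n : ℕ} (A : Matrix (Fin n) (Fin n) ℝ) :
    Matrix (Fin n) (Fin n) ℝ :=
  if h : A.PosSemidef then
    (h.1.eigenvectorUnitary : Matrix (Fin n) (Fin n) ℝ) *
      diagonal (RCLike.ofReal ∘ Real.sqrt ∘ h.1.eigenvalues) *
      (star h.1.eigenvectorUnitary : Matrix (Fin n) (Fin n) ℝ)
  else 0

/-- The polar factor `X (XᵀX)^{-1/2}` of a matrix `X` with full column rank. -/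
noncomputable def polarFactor {m n : ℕ} (X : Matrix (Fin m) (Fin n) ℝ) :
    Matrix (Fin m) (Fin n) ℝ :=
  X * (matrixSqrt (Xᵀ * X))⁻¹

/-- The Frobenius inner product `⟨A, B⟩_F = tr(Aᵀ B)`. -/
noncomputable def frobInner {m n : ℕ} (A B : Matrix (Fin m) (Fin n) ℝ) : ℝ :=
  (Aᵀ * B).trace

/-!
Substituting `W = V S` turns the functional into `f V = ⟨H, V⟩_F + (λ/2) ‖V‖₂²` with `H = G S`,
which has the rank of `G`. Take an orthonormal basis `(vᵢ)` of `ℝⁿ` of eigenvectors of `HᵀH`, so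
that the vectors `H vᵢ` are pairwise orthogonal and `ν = ∑ ‖H vᵢ‖` is the nuclear norm of `H`.
Since `⟨H, V⟩_F = ∑ ⟨H vᵢ, V vᵢ⟩ ≥ -ν ‖V‖₂`, we get `f ≥ -λt²/2` with `t = ν/λ`, and `V` attains
this bound iff `‖V‖₂ ≤ t` and `V vᵢ = -(t/‖H vᵢ‖) H vᵢ` whenever `H vᵢ ≠ 0`. This determines `V`
exactly when no `H vᵢ` vanishes, i.e. when `rank H = n`. Otherwise `rank H < n ≤ m`, and for
`H vⱼ = 0` one may also send `vⱼ` to `t w` with `w` a unit vector orthogonal to the range of `H`,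
which gives a second minimizer.
-/

open scoped RealInnerProductSpace

theorem norm_sum_sq_of_pairwise_inner_eq_zero {E ι : Type*} [NormedAddCommGroup E]
    [InnerProductSpace ℝ E] (s : Finset ι) (y : ι → E)
    (h : Pairwise fun i j => ⟪y i, y j⟫ = 0) : ‖∑ i ∈ s, y i‖ ^ 2 = ∑ i ∈ s, ‖y i‖ ^ 2 := by
  classical
  rw [← real_inner_self_eq_norm_sq, sum_inner]
  refine Finset.sum_congr rfl fun i hi => ?_
  rw [inner_sum, Finset.sum_eq_single i (fun j _ hji => h hji.symm) (fun h' => absurd hi h'),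
    real_inner_self_eq_norm_sq]

theorem eq_neg_smul_of_inner_eq_neg_mul_norm {E : Type*} [NormedAddCommGroup E]
    [InnerProductSpace ℝ E] {x y : E} {t : ℝ} (hx : x ≠ 0) (hy : ‖y‖ ≤ t)
    (h : ⟪x, y⟫ = -(t * ‖x‖)) : y = -(t / ‖x‖) • x := by
  have hx' : 0 < ‖x‖ := norm_pos_iff.mpr hx
  have hsq : ‖‖x‖ • y + t • x‖ ^ 2 ≤ 0 := by
    rw [norm_add_sq_real, norm_smul, norm_smul, real_inner_smul_left, real_inner_smul_right,
      real_inner_comm, h, Real.norm_eq_abs, Real.norm_eq_abs, abs_norm, mul_pow, mul_pow, sq_abs]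
    nlinarith [norm_nonneg y, mul_le_mul hy hy (norm_nonneg y) ((norm_nonneg y).trans hy)]
  have hzero : ‖x‖ • y + t • x = 0 := by
    rw [← norm_eq_zero]; nlinarith [norm_nonneg (‖x‖ • y + t • x)]
  calc y = ‖x‖⁻¹ • (‖x‖ • y) := (inv_smul_smul₀ hx'.ne' y).symm
    _ = ‖x‖⁻¹ • -(t • x) := by rw [eq_neg_of_add_eq_zero_left hzero]
    _ = -(t / ‖x‖) • x := by rw [smul_neg, smul_smul, neg_smul, inv_mul_eq_div]

namespace Matrix

variable {ι κ : Type*} [Fintype κ] [DecidableEq κ]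

theorem trace_transpose_mul_eq_sum_inner [Fintype ι] (H B : Matrix ι κ ℝ)
    (v : OrthonormalBasis κ ℝ (EuclideanSpace ℝ κ)) :
    (Hᵀ * B).trace = ∑ i, ⟪H.toEuclideanLin (v i), B.toEuclideanLin (v i)⟫ := by
  classical
  rw [← trace_toLin_eq _ (EuclideanSpace.basisFun κ ℝ).toBasis,
    ← toEuclideanLin_eq_toLin_orthonormal, toLpLin_mul (q := 2),
    LinearMap.trace_eq_sum_inner _ v, ← conjTranspose_eq_transpose_of_trivial,
    toEuclideanLin_conjTranspose_eq_adjoint]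
  simp only [LinearMap.comp_apply, LinearMap.adjoint_inner_right]

theorem norm_toEuclideanLin_le [Fintype ι] (A : Matrix ι κ ℝ) (x : EuclideanSpace ℝ κ) :
    ‖A.toEuclideanLin x‖ ≤ ‖A‖ * ‖x‖ :=
  A.l2_opNorm_mulVec x

theorem ext_of_toEuclideanLin_basis {A B : Matrix ι κ ℝ} (v : Module.Basis κ ℝ (EuclideanSpace ℝ κ))
    (h : ∀ i, A.toEuclideanLin (v i) = B.toEuclideanLin (v i)) : A = B :=
  toEuclideanLin.injective (v.ext h)

theorem exists_toEuclideanLin_basis_eq (v : Module.Basis κ ℝ (EuclideanSpace ℝ κ))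
    (y : κ → EuclideanSpace ℝ ι) : ∃ A : Matrix ι κ ℝ, ∀ i, A.toEuclideanLin (v i) = y i :=
  ⟨toEuclideanLin.symm (v.constr ℝ y), fun i => by simp⟩

theorem l2_opNorm_le_of_pairwise_inner_eq_zero [Fintype ι] {A : Matrix ι κ ℝ}
    (v : OrthonormalBasis κ ℝ (EuclideanSpace ℝ κ)) {c : ℝ} (hc : 0 ≤ c)
    (horth : Pairwise fun i j => ⟪A.toEuclideanLin (v i), A.toEuclideanLin (v j)⟫ = 0)
    (hle : ∀ i, ‖A.toEuclideanLin (v i)‖ ≤ c) : ‖A‖ ≤ c := by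
  rw [l2_opNorm_def]
  refine ContinuousLinearMap.opNorm_le_bound _ hc fun x => ?_
  change ‖A.toEuclideanLin x‖ ≤ c * ‖x‖
  have hAx : A.toEuclideanLin x = ∑ i, ⟪v i, x⟫ • A.toEuclideanLin (v i) := by
    conv_lhs => rw [← v.sum_repr' x]
    simp only [map_sum, map_smul]
  refine (pow_le_pow_iff_left₀ (norm_nonneg _) (by positivity) two_ne_zero).mp ?_
  calc ‖A.toEuclideanLin x‖ ^ 2 = ∑ i, ⟪v i, x⟫ ^ 2 * ‖A.toEuclideanLin (v i)‖ ^ 2 := by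
        rw [hAx, norm_sum_sq_of_pairwise_inner_eq_zero]
        · simp only [norm_smul, mul_pow, Real.norm_eq_abs, sq_abs]
        · intro i j hij
          rw [real_inner_smul_left, real_inner_smul_right, horth hij, mul_zero, mul_zero]
    _ ≤ ∑ i, ⟪v i, x⟫ ^ 2 * c ^ 2 := by gcongr with i; exact hle i
    _ = (c * ‖x‖) ^ 2 := by rw [← Finset.sum_mul, v.sum_sq_inner_right]; ring

theorem exists_orthonormalBasis_pairwise_inner_toEuclideanLin_eq_zero [Fintype ι]
    (H : Matrix ι κ ℝ) :
    ∃ v : OrthonormalBasis κ ℝ (EuclideanSpace ℝ κ),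
      (Pairwise fun i j => ⟪H.toEuclideanLin (v i), H.toEuclideanLin (v j)⟫ = 0) ∧
      H.rank = Fintype.card {i // H.toEuclideanLin (v i) ≠ 0} := by
  have hherm : (Hᵀ * H).IsHermitian := by
    simpa using isHermitian_conjTranspose_mul_self H
  set v := hherm.eigenvectorBasis
  have hinner : ∀ i j, ⟪H.toEuclideanLin (v i), H.toEuclideanLin (v j)⟫ =
      hherm.eigenvalues j * ⟪v i, v j⟫ := by
    classical
    intro i j
    have hv : Hᵀ.toEuclideanLin (H.toEuclideanLin (v j)) = hherm.eigenvalues j • v j := by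
      rw [toLpLin_apply, toLpLin_apply, WithLp.ofLp_toLp, mulVec_mulVec,
        hherm.mulVec_eigenvectorBasis]
      rfl
    rw [← LinearMap.adjoint_inner_right, ← toEuclideanLin_conjTranspose_eq_adjoint,
      conjTranspose_eq_transpose_of_trivial, hv, real_inner_smul_right]
  refine ⟨v, fun i j hij => (hinner i j).trans (by rw [v.orthonormal.2 hij, mul_zero]), ?_⟩
  rw [← rank_transpose_mul_self, hherm.rank_eq_card_non_zero_eigs]
  refine Fintype.card_congr (Equiv.subtypeEquivRight fun i => ?_)
  have hnorm : ‖H.toEuclideanLin (v i)‖ ^ 2 = hherm.eigenvalues i := by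
    rw [← real_inner_self_eq_norm_sq, hinner, real_inner_self_eq_norm_sq, v.orthonormal.1 i]
    simp
  rw [← hnorm]
  simp

theorem exists_ne_zero_forall_inner_toEuclideanLin_eq_zero [Fintype ι] [DecidableEq ι]
    (H : Matrix ι κ ℝ) (h : H.rank < Fintype.card ι) :
    ∃ w ≠ 0, ∀ x, ⟪H.toEuclideanLin x, w⟫ = 0 := by
  have hrange : LinearMap.range H.toEuclideanLin ≠ ⊤ := by
    intro htop
    have := rank_eq_finrank_range_toLin H (EuclideanSpace.basisFun ι ℝ).toBasis
      (EuclideanSpace.basisFun κ ℝ).toBasis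
    rw [← toEuclideanLin_eq_toLin_orthonormal, htop, finrank_top, finrank_euclideanSpace] at this
    omega
  obtain ⟨w, hw, hw0⟩ :=
    (Submodule.ne_bot_iff _).mp (mt Submodule.orthogonal_eq_bot_iff.mp hrange)
  exact ⟨w, hw0, fun x => Submodule.inner_right_of_mem_orthogonal (LinearMap.mem_range_self _ x) hw⟩

end Matrix

noncomputable def objective {m n : ℕ} (H : Matrix (Fin m) (Fin n) ℝ) (lam : ℝ)
    (V : Matrix (Fin m) (Fin n) ℝ) : ℝ :=
  frobInner H V + lam / 2 * ‖V‖ ^ 2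

section Objective

variable {m n : ℕ} {H : Matrix (Fin m) (Fin n) ℝ} {lam t : ℝ}
  (v : OrthonormalBasis (Fin n) ℝ (EuclideanSpace ℝ (Fin n)))

theorem frobInner_eq_sum_inner (B : Matrix (Fin m) (Fin n) ℝ) :
    frobInner H B = ∑ i, ⟪H.toEuclideanLin (v i), B.toEuclideanLin (v i)⟫ :=
  trace_transpose_mul_eq_sum_inner H B v

theorem neg_norm_mul_l2_opNorm_le_inner (B : Matrix (Fin m) (Fin n) ℝ) (i : Fin n) :
    -(‖H.toEuclideanLin (v i)‖ * ‖B‖) ≤ ⟪H.toEuclideanLin (v i), B.toEuclideanLin (v i)⟫ := by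
  have hBv : ‖B.toEuclideanLin (v i)‖ ≤ ‖B‖ := by
    simpa [v.orthonormal.1 i] using B.norm_toEuclideanLin_le (v i)
  calc -(‖H.toEuclideanLin (v i)‖ * ‖B‖)
      ≤ -(‖H.toEuclideanLin (v i)‖ * ‖B.toEuclideanLin (v i)‖) := by gcongr
    _ ≤ _ := neg_le_of_abs_le (abs_real_inner_le_norm _ _)

theorem neg_mul_le_objective (ht : ∑ i, ‖H.toEuclideanLin (v i)‖ = lam * t)
    (B : Matrix (Fin m) (Fin n) ℝ) :
    -(lam * t * ‖B‖) + lam / 2 * ‖B‖ ^ 2 ≤ objective H lam B := by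
  have hfrob : -(lam * t * ‖B‖) ≤ frobInner H B := by
    rw [frobInner_eq_sum_inner v, ← ht, Finset.sum_mul, ← Finset.sum_neg_distrib]
    exact Finset.sum_le_sum fun i _ => neg_norm_mul_l2_opNorm_le_inner v B i
  unfold objective
  linarith

theorem neg_le_objective (hlam : 0 < lam) (ht : ∑ i, ‖H.toEuclideanLin (v i)‖ = lam * t)
    (B : Matrix (Fin m) (Fin n) ℝ) : -(lam / 2 * t ^ 2) ≤ objective H lam B := by
  nlinarith [neg_mul_le_objective v ht B, mul_nonneg hlam.le (sq_nonneg (‖B‖ - t))]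

theorem objective_le_iff (hlam : 0 < lam)
    (ht : ∑ i, ‖H.toEuclideanLin (v i)‖ = lam * t) (B : Matrix (Fin m) (Fin n) ℝ) :
    objective H lam B ≤ -(lam / 2 * t ^ 2) ↔
      ‖B‖ ≤ t ∧ ∀ i, ⟪H.toEuclideanLin (v i), B.toEuclideanLin (v i)⟫ =
        -(t * ‖H.toEuclideanLin (v i)‖) := by
  have hsum : ∑ i, -(t * ‖H.toEuclideanLin (v i)‖) = -(lam * t ^ 2) := by
    rw [Finset.sum_neg_distrib, ← Finset.mul_sum, ht]; ring
  constructor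
  · intro hB
    have hsq : lam / 2 * (‖B‖ - t) ^ 2 ≤ lam / 2 * 0 := by
      linear_combination neg_mul_le_objective v ht B + hB
    have hnorm : ‖B‖ = t := by
      nlinarith [le_of_mul_le_mul_left hsq (half_pos hlam), sq_nonneg (‖B‖ - t)]
    have hfrob : frobInner H B ≤ -(lam * t ^ 2) := by
      unfold objective at hB; rw [hnorm] at hB; linarith
    have hle : ∀ i ∈ Finset.univ, -(t * ‖H.toEuclideanLin (v i)‖) ≤
        ⟪H.toEuclideanLin (v i), B.toEuclideanLin (v i)⟫ := fun i _ => by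
      simpa [hnorm, mul_comm] using neg_norm_mul_l2_opNorm_le_inner v B i
    have hsum_le : ∑ i, ⟪H.toEuclideanLin (v i), B.toEuclideanLin (v i)⟫ ≤
        ∑ i, -(t * ‖H.toEuclideanLin (v i)‖) := by
      rw [hsum, ← frobInner_eq_sum_inner v]; exact hfrob
    have hsum_eq :=
      (Finset.sum_eq_sum_iff_of_le hle).mp (le_antisymm (Finset.sum_le_sum hle) hsum_le)
    exact ⟨hnorm.le, fun i => (hsum_eq i (Finset.mem_univ i)).symm⟩
  · rintro ⟨hB, hinner⟩
    have hfrob : frobInner H B = -(lam * t ^ 2) := by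
      rw [frobInner_eq_sum_inner v, ← hsum]; exact Finset.sum_congr rfl fun i _ => hinner i
    unfold objective
    rw [hfrob]
    nlinarith [mul_le_mul_of_nonneg_left (pow_le_pow_left₀ (norm_nonneg B) hB 2) hlam.le]

theorem exists_objective_le_of_perturbation (hlam : 0 < lam)
    (ht : ∑ i, ‖H.toEuclideanLin (v i)‖ = lam * t)
    (horth : Pairwise fun i j => ⟪H.toEuclideanLin (v i), H.toEuclideanLin (v j)⟫ = 0)
    (z : Fin n → EuclideanSpace ℝ (Fin m)) (hz_orth : Pairwise fun i j => ⟪z i, z j⟫ = 0)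
    (hzH : ∀ i j, ⟪H.toEuclideanLin (v i), z j⟫ = 0) (hz_le : ∀ i, ‖z i‖ ≤ t)
    (hz_zero : ∀ i, H.toEuclideanLin (v i) ≠ 0 → z i = 0) :
    ∃ A : Matrix (Fin m) (Fin n) ℝ,
      (∀ i, A.toEuclideanLin (v i) =
        -(t / ‖H.toEuclideanLin (v i)‖) • H.toEuclideanLin (v i) + z i) ∧
      objective H lam A ≤ -(lam / 2 * t ^ 2) := by
  obtain ⟨A, hA⟩ := exists_toEuclideanLin_basis_eq v.toBasis
    fun i => -(t / ‖H.toEuclideanLin (v i)‖) • H.toEuclideanLin (v i) + z i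
  simp only [OrthonormalBasis.coe_toBasis] at hA
  have ht0 : 0 ≤ t :=
    nonneg_of_mul_nonneg_right (ht ▸ Finset.sum_nonneg fun i _ => norm_nonneg _) hlam
  refine ⟨A, hA, (objective_le_iff v hlam ht A).mpr ⟨?_, fun i => ?_⟩⟩
  · refine l2_opNorm_le_of_pairwise_inner_eq_zero v ht0 (fun i j hij => ?_) fun i => ?_
    · have hHz : ⟪z i, H.toEuclideanLin (v j)⟫ = 0 := by rw [real_inner_comm, hzH]
      simp only [hA, inner_add_left, inner_add_right, real_inner_smul_left,
        real_inner_smul_right, horth hij, hzH, hHz, hz_orth hij]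
      ring
    · rw [hA]
      by_cases hHv : H.toEuclideanLin (v i) = 0
      · simpa [hHv] using hz_le i
      · rw [hz_zero i hHv, add_zero, norm_smul, Real.norm_eq_abs, abs_neg,
          abs_of_nonneg (by positivity), div_mul_cancel₀ _ (norm_ne_zero_iff.mpr hHv)]
  · rw [hA, inner_add_right, hzH, add_zero, real_inner_smul_right, real_inner_self_eq_norm_sq]
    by_cases hHv : H.toEuclideanLin (v i) = 0
    · simp [hHv]
    · field_simp

theorem exists_objective_le (hlam : 0 < lam) (ht : ∑ i, ‖H.toEuclideanLin (v i)‖ = lam * t)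
    (horth : Pairwise fun i j => ⟪H.toEuclideanLin (v i), H.toEuclideanLin (v j)⟫ = 0) :
    ∃ A : Matrix (Fin m) (Fin n) ℝ,
      (∀ i, A.toEuclideanLin (v i) = -(t / ‖H.toEuclideanLin (v i)‖) • H.toEuclideanLin (v i)) ∧
      objective H lam A ≤ -(lam / 2 * t ^ 2) := by
  have ht0 : 0 ≤ t :=
    nonneg_of_mul_nonneg_right (ht ▸ Finset.sum_nonneg fun i _ => norm_nonneg _) hlam
  simpa using exists_objective_le_of_perturbation v hlam ht horth 0
    (fun _ _ _ => inner_zero_left _) (fun _ _ => inner_zero_right _)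
    (fun _ => by simpa using ht0) (fun _ _ => rfl)

theorem eq_of_objective_le (hlam : 0 < lam) (ht : ∑ i, ‖H.toEuclideanLin (v i)‖ = lam * t)
    (hHv : ∀ i, H.toEuclideanLin (v i) ≠ 0) {A B : Matrix (Fin m) (Fin n) ℝ}
    (hA : objective H lam A ≤ -(lam / 2 * t ^ 2)) (hB : objective H lam B ≤ -(lam / 2 * t ^ 2)) :
    A = B := by
  have himage : ∀ C : Matrix (Fin m) (Fin n) ℝ, objective H lam C ≤ -(lam / 2 * t ^ 2) →
      ∀ i, C.toEuclideanLin (v i) = -(t / ‖H.toEuclideanLin (v i)‖) • H.toEuclideanLin (v i) := by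
    intro C hC i
    obtain ⟨hCnorm, hCinner⟩ := (objective_le_iff v hlam ht C).mp hC
    refine eq_neg_smul_of_inner_eq_neg_mul_norm (hHv i) ?_ (hCinner i)
    simpa [v.orthonormal.1 i] using (C.norm_toEuclideanLin_le (v i)).trans
      (mul_le_mul_of_nonneg_right hCnorm (norm_nonneg _))
  exact ext_of_toEuclideanLin_basis v.toBasis fun i => by
    simp only [OrthonormalBasis.coe_toBasis, himage A hA, himage B hB]

theorem exists_ne_objective_le (hlam : 0 < lam) (ht : ∑ i, ‖H.toEuclideanLin (v i)‖ = lam * t)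
    (ht0 : 0 < t)
    (horth : Pairwise fun i j => ⟪H.toEuclideanLin (v i), H.toEuclideanLin (v j)⟫ = 0)
    {j : Fin n} (hj : H.toEuclideanLin (v j) = 0) (hrank : H.rank < m) :
    ∃ A B : Matrix (Fin m) (Fin n) ℝ, A ≠ B ∧ objective H lam A ≤ -(lam / 2 * t ^ 2) ∧
      objective H lam B ≤ -(lam / 2 * t ^ 2) := by
  obtain ⟨w, hw0, hw⟩ :=
    exists_ne_zero_forall_inner_toEuclideanLin_eq_zero H (by rwa [Fintype.card_fin])
  set c := (t / ‖w‖) • w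
  have hc0 : c ≠ 0 := smul_ne_zero (div_ne_zero ht0.ne' (norm_ne_zero_iff.mpr hw0)) hw0
  have hc : ‖c‖ = t := by
    rw [norm_smul, Real.norm_eq_abs, abs_of_pos (div_pos ht0 (norm_pos_iff.mpr hw0)),
      div_mul_cancel₀ _ (norm_ne_zero_iff.mpr hw0)]
  obtain ⟨A, hA, hAle⟩ := exists_objective_le v hlam ht horth
  obtain ⟨B, hB, hBle⟩ := exists_objective_le_of_perturbation v hlam ht horth
    (fun i => if i = j then c else 0)
    (fun i k hik => by dsimp only; split_ifs <;> simp_all)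
    (fun i k => by split_ifs <;> simp [c, real_inner_smul_right, hw])
    (fun i => by split_ifs <;> simp [hc, ht0.le])
    (fun i hi => if_neg fun (hij : i = j) => hi (hij ▸ hj))
  refine ⟨A, B, fun hAB => hc0 ?_, hAle, hBle⟩
  have hBj := hB j
  rw [← hAB, hA j] at hBj
  simpa [hj] using hBj.symm

end Objective

theorem existsUnique_objective_le_iff_rank_eq {m n : ℕ} (hmn : n ≤ m)
    {H : Matrix (Fin m) (Fin n) ℝ} (hH : H ≠ 0) {lam : ℝ} (hlam : 0 < lam) :
    (∃! V, ∀ V', objective H lam V ≤ objective H lam V') ↔ H.rank = n := by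
  obtain ⟨v, horth, hrank⟩ := exists_orthonormalBasis_pairwise_inner_toEuclideanLin_eq_zero H
  set t := (∑ i, ‖H.toEuclideanLin (v i)‖) / lam
  have ht : ∑ i, ‖H.toEuclideanLin (v i)‖ = lam * t := by simp only [t]; field_simp
  have ht0 : 0 < t := by
    obtain ⟨i, hi⟩ : ∃ i, H.toEuclideanLin (v i) ≠ 0 := by
      by_contra! h
      exact hH (ext_of_toEuclideanLin_basis v.toBasis fun i => by simpa using h i)
    exact div_pos ((norm_pos_iff.mpr hi).trans_le
      (Finset.single_le_sum (f := fun j => ‖H.toEuclideanLin (v j)‖)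
        (fun j _ => norm_nonneg _) (Finset.mem_univ i))) hlam
  obtain ⟨A₀, -, hA₀⟩ := exists_objective_le v hlam ht horth
  have hmin_iff : ∀ B, (∀ V', objective H lam B ≤ objective H lam V') ↔
      objective H lam B ≤ -(lam / 2 * t ^ 2) :=
    fun B => ⟨fun hB => (hB A₀).trans hA₀, fun hB V' => hB.trans (neg_le_objective v hlam ht V')⟩
  have hrank_iff : H.rank = n ↔ ∀ i, H.toEuclideanLin (v i) ≠ 0 := by
    refine ⟨fun h i hi => ?_, fun h => ?_⟩
    · have := Fintype.card_subtype_lt (p := fun i => H.toEuclideanLin (v i) ≠ 0) (not_not.mpr hi)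
      rw [← hrank, h, Fintype.card_fin] at this
      exact this.false
    · rw [hrank, Fintype.card_congr (Equiv.subtypeUnivEquiv h), Fintype.card_fin]
  simp only [hmin_iff]
  refine ⟨fun ⟨B, _, huniq⟩ => hrank_iff.mpr fun j hj => ?_,
    fun hfull => ⟨A₀, hA₀, fun B hB => eq_of_objective_le v hlam ht (hrank_iff.mp hfull) hB hA₀⟩⟩
  have hlt : H.rank < m :=
    ((rank_le_width H).lt_of_ne fun h => hrank_iff.mp h j hj).trans_le hmn
  obtain ⟨A, A', hne, hA, hA'⟩ := exists_ne_objective_le v hlam ht ht0 horth hj hlt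
  exact hne ((huniq A hA).trans (huniq A' hA').symm)

theorem frobInner_mul_right {m n : ℕ} (A B : Matrix (Fin m) (Fin n) ℝ)
    (C : Matrix (Fin n) (Fin n) ℝ) : frobInner A (B * C) = frobInner (A * Cᵀ) B := by
  unfold frobInner
  rw [transpose_mul, transpose_transpose, ← Matrix.mul_assoc, trace_mul_comm, Matrix.mul_assoc]

/-- For `G ≠ 0`, `S` diagonal with strictly positive entries and `λ > 0`, the functional
`ΔW ↦ ⟨G, ΔW⟩_F + (λ/2) ‖ΔW S⁻¹‖₂²` has a unique global minimizer
if and only if `G` has full column rank `n`. -/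
theorem stmt_2 {m n : ℕ} (hmn : n ≤ m) (G : Matrix (Fin m) (Fin n) ℝ)
    (hG0 : G ≠ 0) (d : Fin n → ℝ) (hd : ∀ i, 0 < d i) (lam : ℝ) (hlam : 0 < lam) :
    let S : Matrix (Fin n) (Fin n) ℝ := Matrix.diagonal d
    ((∃! W : Matrix (Fin m) (Fin n) ℝ, ∀ W' : Matrix (Fin m) (Fin n) ℝ,
        frobInner G W + lam / 2 * matrixSpectralNorm (W * S⁻¹) ^ 2 ≤
          frobInner G W' + lam / 2 * matrixSpectralNorm (W' * S⁻¹) ^ 2) ↔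
      G.rank = n) := by
  intro S
  have hS : IsUnit S.det := by
    simpa [S, det_diagonal, Finset.prod_ne_zero_iff] using fun i => (hd i).ne'
  have hmulS : Function.Bijective fun V : Matrix (Fin m) (Fin n) ℝ => V * S :=
    Function.bijective_iff_has_inverse.mpr ⟨(· * S⁻¹),
      fun V => by simp [Matrix.mul_assoc, mul_nonsing_inv _ hS],
      fun W => by simp [Matrix.mul_assoc, nonsing_inv_mul _ hS]⟩
  have hGS : G * S ≠ 0 := fun h => hG0 <| by
    simpa [Matrix.mul_assoc, mul_nonsing_inv _ hS] using congrArg (· * S⁻¹) h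
  have hobj : ∀ V, frobInner G (V * S) + lam / 2 * matrixSpectralNorm (V * S * S⁻¹) ^ 2 =
      objective (G * S) lam V := fun V => by
    rw [frobInner_mul_right, diagonal_transpose, Matrix.mul_assoc, mul_nonsing_inv _ hS,
      Matrix.mul_one]
    rfl
  rw [← rank_mul_eq_left_of_isUnit_det _ _ hS, ← existsUnique_objective_le_iff_rank_eq hmn hGS hlam,
    hmulS.existsUnique_iff]
  refine existsUnique_congr fun V => ?_
  rw [hmulS.surjective.forall]
  simp only [hobj]
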